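/- arXiv:2006.03551 — 2 statements merged into one kernel-verified Lean document; each statement's English description precedes it below -/
import Mathlib

section
/- Let P be a Poisson algebra over a field 𝔽 and let I be a Poisson ideal of P. Then for all x, y ∈ I and every positive integer m, {x,y}²·γₘ(I) ⊆ γ_{m+1}(I)·P, i.e. {x,y}²·z ∈ γ_{m+1}(I)·P for every z ∈ γₘ(I). -/
/-- A Poisson bracket on a commutative associative unital `F`-algebra `P`:
an `F`-bilinear, alternating bracket satisfying the Jacobi identity and the
Leibniz rule `{a·b, c} = a·{b,c} + b·{a,c}`. -/
structure PoissonBracket (F P : Type*) [Field F] [CommRing P] [Algebra F P] where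
  bracket : P → P → P
  add_left : ∀ a b c : P, bracket (a + b) c = bracket a c + bracket b c
  smul_left : ∀ (r : F) (a b : P), bracket (r • a) b = r • bracket a b
  add_right : ∀ a b c : P, bracket a (b + c) = bracket a b + bracket a c
  smul_right : ∀ (r : F) (a b : P), bracket a (r • b) = r • bracket a b
  alt : ∀ a : P, bracket a a = 0
  jacobi : ∀ a b c : P,
    bracket (bracket a b) c + bracket (bracket b c) a + bracket (bracket c a) b = 0
  leibniz : ∀ a b c : P, bracket (a * b) c = a * bracket b c + b * bracket a c

namespace PoissonBracket

variable {F P : Type*} [Field F] [CommRing P] [Algebra F P]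

/-- `{A, B}`: the `F`-span of all brackets of elements of `A` with elements of `B`. -/
def lieSpan (pb : PoissonBracket F P) (A B : Submodule F P) : Submodule F P :=
  Submodule.span F {z : P | ∃ a ∈ A, ∃ b ∈ B, z = pb.bracket a b}

/-- Upper derived series: `δ̃₀(P) = P`, `δ̃ₙ₊₁(P) = {δ̃ₙ(P), δ̃ₙ(P)}·P`. -/
def udelta (pb : PoissonBracket F P) : ℕ → Submodule F P
  | 0 => ⊤
  | n + 1 => pb.lieSpan (pb.udelta n) (pb.udelta n) * ⊤

/-- Derived series of a Lie ideal `I`: `δ₀(I) = I`, `δₙ₊₁(I) = {δₙ(I), δₙ(I)}`. -/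
def dseries (pb : PoissonBracket F P) (I : Submodule F P) : ℕ → Submodule F P
  | 0 => I
  | n + 1 => pb.lieSpan (pb.dseries I n) (pb.dseries I n)

/-- Lower central series of a Lie ideal `I`, indexed so that `lcs I 1 = γ₁(I) = I`
and `lcs I (n+1) = γₙ₊₁(I) = {γₙ(I), I}` for `n ≥ 1` (index `0` is a dummy equal to `I`). -/
def lcs (pb : PoissonBracket F P) (I : Submodule F P) : ℕ → Submodule F P
  | 0 => I
  | 1 => I
  | n + 2 => pb.lieSpan (pb.lcs I (n + 1)) I

/-- Upper Lie power series: `P⁽¹⁾ = P`, `P⁽ⁿ⁾ = {P⁽ⁿ⁻¹⁾, P}·P` for `n > 1`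
(index `0` is a dummy equal to `P`). -/
def ulps (pb : PoissonBracket F P) : ℕ → Submodule F P
  | 0 => ⊤
  | 1 => ⊤
  | n + 2 => pb.lieSpan (pb.ulps (n + 1)) ⊤ * ⊤

/-- A Poisson ideal: an ideal for the associative product which is also a Lie ideal. -/
def IsPoissonIdeal (pb : PoissonBracket F P) (I : Submodule F P) : Prop :=
  (∀ x ∈ I, ∀ p : P, p * x ∈ I) ∧ (∀ x ∈ I, ∀ p : P, pb.bracket x p ∈ I)

/-- The Poisson ideal generated by a set `S`: the smallest Poisson ideal containing `S`. -/
def poissonSpan (pb : PoissonBracket F P) (S : Set P) : Submodule F P :=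
  sInf {I : Submodule F P | pb.IsPoissonIdeal I ∧ S ⊆ I}

end PoissonBracket

open PoissonBracket

/-!
Write `w = {x,y}` and let `c ∈ γₙ(I)`, `v ∈ I`. Bracketing the Leibniz expansion of `{c, ab}`
with `u` shows that, for `a, b, u ∈ I`,
`{c,a}{b,u} ≡ -{c,b}{a,u}` modulo `γₙ₊₂(I)·P`,
because every other term contains a double bracket `{{c, ·}, ·}` of elements of `I`.
Taking `(a,b,u) = (y,v,x)` gives `{c,v}·w ≡ {c,y}{v,x}`, and `(a,b,u) = (x,y,y)`
gives `{c,y}·w ≡ 0`; hence `w²{c,v} ≡ 0`. Since `γₙ₊₁(I)` is spanned by such `{c,v}`,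
this is the claim.
-/

namespace PoissonBracket

variable {F P : Type*} [Field F] [CommRing P] [Algebra F P] (pb : PoissonBracket F P)

lemma bracket_antisymm (a b : P) : pb.bracket a b = -pb.bracket b a := by
  have h := pb.alt (a + b)
  rw [pb.add_left, pb.add_right, pb.add_right, pb.alt, pb.alt] at h
  linear_combination h

lemma bracket_mul_right (a b c : P) :
    pb.bracket a (b * c) = b * pb.bracket a c + c * pb.bracket a b := by
  rw [pb.bracket_antisymm a, pb.leibniz, pb.bracket_antisymm c, pb.bracket_antisymm b]
  ring

lemma bracket_bracket_mul (c a b u : P) :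
    pb.bracket (pb.bracket c (a * b)) u =
      a * pb.bracket (pb.bracket c b) u + b * pb.bracket (pb.bracket c a) u +
        pb.bracket c b * pb.bracket a u + pb.bracket c a * pb.bracket b u := by
  rw [pb.bracket_mul_right, pb.add_left, pb.leibniz, pb.leibniz]
  ring

lemma lieSpan_le {A B N : Submodule F P}
    (h : ∀ a ∈ A, ∀ b ∈ B, pb.bracket a b ∈ N) : pb.lieSpan A B ≤ N :=
  Submodule.span_le.mpr fun _ ⟨a, ha, b, hb, hz⟩ => hz ▸ h a ha b hb

lemma bracket_mem_lcs_succ {I : Submodule F P} {n : ℕ} {c v : P}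
    (hc : c ∈ pb.lcs I (n + 1)) (hv : v ∈ I) : pb.bracket c v ∈ pb.lcs I (n + 2) :=
  Submodule.subset_span ⟨c, hc, v, hv, rfl⟩

end PoissonBracket

namespace Submodule

variable {F P : Type*} [Field F] [CommRing P] [Algebra F P]

lemma mem_mul_top {J : Submodule F P} {s : P} (hs : s ∈ J) : s ∈ J * ⊤ := by
  simpa using mul_mem_mul hs (mem_top (x := (1 : P)))

lemma mul_mem_mul_top {J : Submodule F P} {s : P} (hs : s ∈ J * ⊤) (p : P) :
    p * s ∈ J * ⊤ := by
  have h : J * ⊤ * ⊤ ≤ J * ⊤ := by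
    rw [mul_assoc]
    exact mul_le_mul' le_rfl le_top
  rw [mul_comm p s]
  exact h (mul_mem_mul hs mem_top)

end Submodule

namespace PoissonBracket

variable {F P : Type*} [Field F] [CommRing P] [Algebra F P] (pb : PoissonBracket F P)
  {I : Submodule F P} (hI : ∀ x ∈ I, ∀ p : P, p * x ∈ I) {n : ℕ} {c : P}
  (hc : c ∈ pb.lcs I (n + 1))
include hI hc

lemma bracket_mul_bracket_add_mem {a b u : P} (ha : a ∈ I) (hb : b ∈ I) (hu : u ∈ I) :
    pb.bracket c a * pb.bracket b u + pb.bracket c b * pb.bracket a u ∈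
      pb.lcs I (n + 3) * ⊤ := by
  have hdouble : ∀ w ∈ I, pb.bracket (pb.bracket c w) u ∈ pb.lcs I (n + 3) * ⊤ :=
    fun w hw => Submodule.mem_mul_top (pb.bracket_mem_lcs_succ (pb.bracket_mem_lcs_succ hc hw) hu)
  have hexpand := pb.bracket_bracket_mul c a b u
  rw [show pb.bracket c a * pb.bracket b u + pb.bracket c b * pb.bracket a u =
      pb.bracket (pb.bracket c (a * b)) u - a * pb.bracket (pb.bracket c b) u -
        b * pb.bracket (pb.bracket c a) u by rw [hexpand]; ring]
  exact sub_mem (sub_mem (hdouble _ (hI b hb a))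
    (Submodule.mul_mem_mul_top (hdouble b hb) a)) (Submodule.mul_mem_mul_top (hdouble a ha) b)

lemma bracket_sq_mul_bracket_mem {x y v : P} (hx : x ∈ I) (hy : y ∈ I) (hv : v ∈ I) :
    pb.bracket x y ^ 2 * pb.bracket c v ∈ pb.lcs I (n + 3) * ⊤ := by
  have hswap := pb.bracket_mul_bracket_add_mem hI hc hy hv hx
  have hvanish := pb.bracket_mul_bracket_add_mem hI hc hx hy hy
  rw [show pb.bracket x y ^ 2 * pb.bracket c v =
      pb.bracket v x * (pb.bracket c x * pb.bracket y y + pb.bracket c y * pb.bracket x y) -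
        pb.bracket x y * (pb.bracket c y * pb.bracket v x + pb.bracket c v * pb.bracket y x) by
    rw [pb.alt, pb.bracket_antisymm y x]; ring]
  exact sub_mem (Submodule.mul_mem_mul_top hvanish _) (Submodule.mul_mem_mul_top hswap _)

end PoissonBracket

theorem bracket_sq_mul_lcs_mem_general
    {F P : Type*} [Field F] [CommRing P] [Algebra F P]
    (pb : PoissonBracket F P) (I : Submodule F P) (hI : pb.IsPoissonIdeal I)
    (x y : P) (hx : x ∈ I) (hy : y ∈ I)
    (m : ℕ) :
    ∀ z ∈ pb.lcs I m,
      (pb.bracket x y) ^ 2 * z ∈ pb.lcs I (m + 1) * ⊤ := by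
  intro z hz
  obtain _ | _ | n := m
  · exact Submodule.mul_mem_mul_top (Submodule.mem_mul_top hz) _
  · have hw : pb.bracket x y ∈ pb.lcs I 2 := pb.bracket_mem_lcs_succ (n := 0) hx hy
    rw [sq, mul_assoc]
    exact Submodule.mul_mem_mul hw Submodule.mem_top
  · have hspan : pb.lcs I (n + 2) ≤
        (pb.lcs I (n + 3) * ⊤).comap (LinearMap.mulLeft F (pb.bracket x y ^ 2)) :=
      pb.lieSpan_le fun c hc v hv => pb.bracket_sq_mul_bracket_mem hI.1 hc hx hy hv
    exact hspan hz

/-- For a Poisson ideal `I` and `x, y ∈ I`,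
`{x,y}²·γₘ(I) ⊆ γ_{m+1}(I)·P` for every positive integer `m`. -/
theorem bracket_sq_mul_lcs_mem
    {F P : Type*} [Field F] [CommRing P] [Algebra F P]
    (pb : PoissonBracket F P) (I : Submodule F P) (hI : pb.IsPoissonIdeal I)
    (x y : P) (hx : x ∈ I) (hy : y ∈ I)
    (m : ℕ) (hm : 1 ≤ m) :
    ∀ z ∈ pb.lcs I m,
      (pb.bracket x y) ^ 2 * z ∈ pb.lcs I (m + 1) * ⊤ :=
  bracket_sq_mul_lcs_mem_general pb I hI x y hx hy m
end

section
/- Let P be a reduced Poisson algebra over a field 𝔽 (P has no nonzero nilpotent elements). Then P is Lie nilpotent if and only if P is abelian, i.e. {P,P} = 0. -/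
/-! If `γₙ₊₃ = 0` and `v ∈ γₙ₊₁`, then for every `y` both `u = {v, y}` and `v·u = {v, v·y}` lie in
`γₙ₊₂`, so they Poisson-commute with `y`, and the Leibniz rule gives
`0 = {v·u, y} = v·{u, y} + u² = u²`. Reducedness gives `u = 0`, i.e. `γₙ₊₂ = 0`; descending in `n`
yields `γ₂ = {P, P} = 0`. -/

namespace PoissonBracket

variable {F P : Type*} [Field F] [CommRing P] [Algebra F P] (pb : PoissonBracket F P)

theorem bracket_swap (x y : P) : pb.bracket y x = -pb.bracket x y := by
  have h := pb.alt (x + y)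
  rw [pb.add_left, pb.add_right, pb.add_right, pb.alt, pb.alt] at h
  linear_combination h

theorem bracket_zero_left (b : P) : pb.bracket 0 b = 0 := by
  simpa using pb.smul_left 0 0 b

theorem bracket_mul_self_right (v y : P) : pb.bracket v (v * y) = v * pb.bracket v y := by
  rw [pb.bracket_swap (v * y), pb.leibniz, pb.bracket_swap v y, pb.alt]
  ring

theorem bracket_mul_bracket (v y : P) :
    pb.bracket (v * pb.bracket v y) y =
      v * pb.bracket (pb.bracket v y) y + pb.bracket v y ^ 2 := by
  rw [pb.leibniz, sq]

theorem bracket_eq_zero_of_bracket_bracket_eq_zero [IsReduced P] {v y : P}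
    (h₁ : pb.bracket (pb.bracket v y) y = 0) (h₂ : pb.bracket (v * pb.bracket v y) y = 0) :
    pb.bracket v y = 0 := by
  rw [bracket_mul_bracket, h₁, mul_zero, zero_add] at h₂
  exact IsNilpotent.eq_zero ⟨2, h₂⟩

theorem bracket_mem_lieSpan {A B : Submodule F P} {a b : P} (ha : a ∈ A) (hb : b ∈ B) :
    pb.bracket a b ∈ pb.lieSpan A B :=
  Submodule.subset_span ⟨a, ha, b, hb, rfl⟩

theorem lieSpan_eq_bot_iff {A B : Submodule F P} :
    pb.lieSpan A B = ⊥ ↔ ∀ a ∈ A, ∀ b ∈ B, pb.bracket a b = 0 := by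
  refine ⟨fun h a ha b hb => ?_, fun h => Submodule.span_eq_bot.2 ?_⟩
  · simpa [h] using pb.bracket_mem_lieSpan ha hb
  · rintro _ ⟨a, ha, b, hb, rfl⟩
    exact h a ha b hb

theorem bracket_mem_lcs {I : Submodule F P} {a b : P} {n : ℕ} (ha : a ∈ pb.lcs I (n + 1))
    (hb : b ∈ I) : pb.bracket a b ∈ pb.lcs I (n + 2) :=
  pb.bracket_mem_lieSpan ha hb

theorem lcs_succ_eq_bot {I : Submodule F P} {n : ℕ} (h : pb.lcs I n = ⊥) :
    pb.lcs I (n + 1) = ⊥ := by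
  cases n with
  | zero => exact h
  | succ n =>
    refine pb.lieSpan_eq_bot_iff.2 fun a ha b _ => ?_
    rw [h, Submodule.mem_bot] at ha
    rw [ha, bracket_zero_left]

theorem lcs_top_two_eq_bot_iff : pb.lcs ⊤ 2 = ⊥ ↔ ∀ x y : P, pb.bracket x y = 0 := by
  simp [lcs, lieSpan_eq_bot_iff]

theorem lcs_top_eq_bot_of_succ_eq_bot [IsReduced P] {n : ℕ} (h : pb.lcs ⊤ (n + 3) = ⊥) :
    pb.lcs ⊤ (n + 2) = ⊥ := by
  refine pb.lieSpan_eq_bot_iff.2 fun v hv y _ => ?_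
  have hu : pb.bracket v y ∈ pb.lcs ⊤ (n + 2) := pb.bracket_mem_lcs hv trivial
  have hvu : v * pb.bracket v y ∈ pb.lcs ⊤ (n + 2) := by
    rw [← bracket_mul_self_right]
    exact pb.bracket_mem_lcs hv trivial
  have central : ∀ w ∈ pb.lcs ⊤ (n + 2), pb.bracket w y = 0 := fun w hw =>
    pb.lieSpan_eq_bot_iff.1 h w hw y trivial
  exact pb.bracket_eq_zero_of_bracket_bracket_eq_zero (central _ hu) (central _ hvu)

theorem lcs_top_two_eq_bot_of_eq_bot [IsReduced P] {n : ℕ} (h : pb.lcs ⊤ (n + 2) = ⊥) :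
    pb.lcs ⊤ 2 = ⊥ := by
  induction n with
  | zero => exact h
  | succ n ih => exact ih (pb.lcs_top_eq_bot_of_succ_eq_bot h)

end PoissonBracket

open PoissonBracket

/-- A reduced Poisson algebra is Lie nilpotent iff it is abelian. -/
theorem reduced_lieNilpotent_iff_abelian
    {F P : Type*} [Field F] [CommRing P] [Algebra F P] [IsReduced P]
    (pb : PoissonBracket F P) :
    (∃ c : ℕ, pb.lcs ⊤ c = ⊥) ↔ ∀ x y : P, pb.bracket x y = 0 := by
  rw [← lcs_top_two_eq_bot_iff]
  refine ⟨fun ⟨c, hc⟩ => ?_, fun h => ⟨2, h⟩⟩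
  exact pb.lcs_top_two_eq_bot_of_eq_bot (pb.lcs_succ_eq_bot (pb.lcs_succ_eq_bot hc))
end
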